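/- Let B and C be finite types with |B| ≥ 2 and |C| ≥ 2. Let R[B;C] be the subgroup of Aut((B × C)^ℤ) generated by the partial shift σ₂ together with the symbol permutations π̄ where π ranges over the permutations of B × C satisfying (π(b,c)).1 = b for all (b,c) ∈ B × C. Then R[B;C] is isomorphic, as a group, to P((ℤ → B), Perm C), where X = ℤ → B is the full shift (the whole space, as a subshift) and Perm C acts on C in the natural way. -/

import Mathlib

open Function

/-- The shift map on `ℤ → A`. -/
def shiftMap (A : Type*) : (ℤ → A) → (ℤ → A) := fun x i => x (i + 1)

/-- The shift map as a permutation of `ℤ → A`. -/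
def shiftPerm (A : Type*) : Equiv.Perm (ℤ → A) where
  toFun := shiftMap A
  invFun x i := x (i - 1)
  left_inv x := funext fun i => by simp [shiftMap]
  right_inv x := funext fun i => by simp [shiftMap]

/-- Finite types carry the discrete topology. -/
instance fintypeDiscreteTopology (A : Type*) [Fintype A] : TopologicalSpace A := ⊥

/-- The automorphism group of the full shift `A^ℤ`: shift-commuting self-homeomorphisms of
`ℤ → A`, as a subgroup of the permutation group of `ℤ → A`. -/
def FullShiftAut (A : Type*) [Fintype A] : Subgroup (Equiv.Perm (ℤ → A)) where
  carrier := { f | Continuous ⇑f ∧ Continuous ⇑f.symm ∧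
      ∀ x, f (shiftMap A x) = shiftMap A (f x) }
  one_mem' := ⟨continuous_id, continuous_id, fun _ => rfl⟩
  mul_mem' := by
    rintro f g ⟨hf1, hf2, hf3⟩ ⟨hg1, hg2, hg3⟩
    refine ⟨?_, ?_, fun x => ?_⟩
    · exact hf1.comp hg1
    · exact hg2.comp hf2
    · show f (g (shiftMap A x)) = shiftMap A (f (g x))
      rw [hg3, hf3]
  inv_mem' := by
    rintro f ⟨hf1, hf2, hf3⟩
    refine ⟨hf2, hf1, fun x => ?_⟩
    apply f.injective
    show f (f.symm (shiftMap A x)) = f (shiftMap A (f.symm x))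
    rw [Equiv.apply_symm_apply, hf3, Equiv.apply_symm_apply]

/-- The symbol permutation determined by a permutation of the alphabet. -/
def symbolPerm {A : Type*} (π : Equiv.Perm A) : Equiv.Perm (ℤ → A) :=
  Equiv.piCongrRight fun _ => π

/-- The partial shift on the first track. -/
def partialShift₁ (B C : Type*) : Equiv.Perm (ℤ → B × C) where
  toFun x i := ((x (i + 1)).1, (x i).2)
  invFun x i := ((x (i - 1)).1, (x i).2)
  left_inv x := funext fun i => by simp
  right_inv x := funext fun i => by simp

/-- The partial shift on the second track. -/
def partialShift₂ (B C : Type*) : Equiv.Perm (ℤ → B × C) where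
  toFun x i := ((x i).1, (x (i + 1)).2)
  invFun x i := ((x i).1, (x (i - 1)).2)
  left_inv x := funext fun i => by simp
  right_inv x := funext fun i => by simp

/-- `PAut[B;C]`: the subgroup of the automorphism group of `(B × C)^ℤ` generated by the two
partial shifts and all symbol permutations. -/
def PAut (B C : Type*) : Subgroup (Equiv.Perm (ℤ → B × C)) :=
  Subgroup.closure
    ({partialShift₁ B C, partialShift₂ B C} ∪ Set.range (symbolPerm (A := B × C)))

attribute [local instance] Classical.propDecidable

/-- The shift on `(ℤ → B) × A`: `ŝ(x, a) = (σ x, a)`. -/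
noncomputable def shiftFst (B A : Type*) : Equiv.Perm ((ℤ → B) × A) :=
  (shiftPerm B).prodCongr (Equiv.refl A)

/-- The controlled action `ctrl(g, C')` on `(ℤ → B) × A`: apply `g` on the second coordinate
exactly when the first coordinate lies in `C'`. -/
noncomputable def ctrlFull {B : Type*} {G : Type*} [Group G] {A : Type*} [MulAction G A]
    (g : G) (C' : Set (ℤ → B)) : Equiv.Perm ((ℤ → B) × A) where
  toFun p := if p.1 ∈ C' then (p.1, g • p.2) else p
  invFun p := if p.1 ∈ C' then (p.1, g⁻¹ • p.2) else p
  left_inv := by rintro ⟨x, a⟩; by_cases h : x ∈ C' <;> simp [h]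
  right_inv := by rintro ⟨x, a⟩; by_cases h : x ∈ C' <;> simp [h]

/-- The group `P(ℤ → B, G)` (with `X = ℤ → B` the full shift): generated by the shift together
with the controlled maps `ctrl(g, C')` over basic cylinders `C'`. -/
noncomputable def PGroupFull (B : Type*) (G : Type*) [Group G] (A : Type*) [MulAction G A] :
    Subgroup (Equiv.Perm ((ℤ → B) × A)) :=
  Subgroup.closure
    ({shiftFst B A} ∪ {f | ∃ (g : G) (i : ℤ) (s : B), f = ctrlFull g {x : ℤ → B | x i = s}})

/-- `R[B;C]`: the subgroup of `Aut((B × C)^ℤ)` generated by the partial shift on the second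
track together with symbol permutations fixing the first track. -/
def RGrp (B C : Type*) : Subgroup (Equiv.Perm (ℤ → B × C)) :=
  Subgroup.closure
    ({partialShift₂ B C} ∪
      {f | ∃ π : Equiv.Perm (B × C), (∀ a : B × C, (π a).1 = a.1) ∧ f = symbolPerm π})

/-!
Both groups are faithful images of the semidirect product `((ℤ → B) → Perm C) ⋊ ℤ`, where `ℤ`
acts by shifting the argument. On `ℤ → B × C`, a function `F` acts at coordinate `i` by the
permutation `F (σⁱ x₁)` of the second track and `1 ∈ ℤ` acts as `σ₂`; on `(ℤ → B) × C`, `F` acts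
by `(x, c) ↦ (x, F x c)` and `1 ∈ ℤ` acts as `ŝ⁻¹`. The generators of `R[B;C]` are the images of
the shift and of the functions of `x 0`, those of `P` the images of the shift and of the indicators
of cylinders. These generate the same subgroup: a cylinder at `i` is a shift conjugate of one at
`0`, and since `B` is finite a function of `x 0` is a product of indicators of cylinders at `0`.
Faithfulness holds because a nonzero shift is visible on a nontrivial alphabet: `C` for the first
action, `B` for the second.
-/

open Equiv SemidirectProduct

section Powers

variable {A B C : Type*}

@[simp]
lemma shiftPerm_zpow_apply (n : ℤ) (y : ℤ → A) (i : ℤ) : (shiftPerm A ^ n) y i = y (i + n) := by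
  induction n using Int.induction_on generalizing y with
  | zero => simp
  | succ k ih =>
    rw [zpow_add_one, Perm.mul_apply, ih]
    simp [shiftPerm, shiftMap, add_assoc]
  | pred k ih =>
    rw [zpow_sub_one, Perm.mul_apply, ih]
    simp [shiftPerm, Perm.inv_def, sub_eq_add_neg, add_assoc]

@[simp]
lemma partialShift₂_zpow_apply (n : ℤ) (x : ℤ → B × C) (i : ℤ) :
    (partialShift₂ B C ^ n) x i = ((x i).1, (x (i + n)).2) := by
  induction n using Int.induction_on generalizing x with
  | zero => simp
  | succ k ih =>
    rw [zpow_add_one, Perm.mul_apply, ih]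
    simp [partialShift₂, add_assoc]
  | pred k ih =>
    rw [zpow_sub_one, Perm.mul_apply, ih]
    simp [partialShift₂, Perm.inv_def, sub_eq_add_neg, add_assoc]

@[simp]
lemma shiftFst_zpow_apply (n : ℤ) (p : (ℤ → B) × A) :
    (shiftFst B A ^ n) p = ((shiftPerm B ^ n) p.1, p.2) := by
  induction n using Int.induction_on generalizing p with
  | zero => simp
  | succ k ih =>
    rw [zpow_add_one, Perm.mul_apply, ih, zpow_add_one, Perm.mul_apply]
    rfl
  | pred k ih =>
    rw [zpow_sub_one, Perm.mul_apply, ih, zpow_sub_one, Perm.mul_apply]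
    rfl

lemma shiftPerm_zpow_zpow (m n : ℤ) (y : ℤ → A) :
    (shiftPerm A ^ m) ((shiftPerm A ^ n) y) = (shiftPerm A ^ (m + n)) y := by
  rw [← Perm.mul_apply, ← zpow_add]

end Powers

lemma eq_zero_of_forall_apply_zero_eq {A : Type*} [Nontrivial A] {n : ℤ} {g : A → A}
    (h : ∀ z : ℤ → A, z 0 = g (z n)) : n = 0 := by
  by_contra hn
  obtain ⟨a, b, hab⟩ := exists_pair_ne A
  have hb := h fun _ => b
  have ha := h (Function.update (fun _ => b) 0 a)
  simp only [Function.update_self, Function.update_of_ne hn] at ha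
  exact hab (ha.trans hb.symm)

lemma Equiv.Perm.exists_prodCongrRight_eq {B C : Type*} {π : Perm (B × C)}
    (hπ : ∀ a, (π a).1 = a.1) : ∃ p : B → Perm C, prodCongrRight p = π := by
  have hπ_symm (a : B × C) : (π.symm a).1 = a.1 := by simpa using (hπ (π.symm a)).symm
  refine ⟨fun b => ⟨fun c => (π (b, c)).2, fun c => (π.symm (b, c)).2, fun c => ?_, fun c => ?_⟩,
    ?_⟩
  · simp [show (b, (π (b, c)).2) = π (b, c) from Prod.ext (hπ (b, c)).symm rfl]
  · simp [show (b, (π.symm (b, c)).2) = π.symm (b, c) from Prod.ext (hπ_symm (b, c)).symm rfl]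
  · ext ⟨b, c⟩ <;> simp [hπ]

section Semidirect

variable (B G : Type*) [Group G]

def shiftMulAut : Multiplicative ℤ →* MulAut ((ℤ → B) → G) :=
  mulAutArrow.comp (zpowersHom _ (shiftPerm B)⁻¹)

variable {B G} in
@[simp]
lemma shiftMulAut_apply (n : Multiplicative ℤ) (F : (ℤ → B) → G) (y : ℤ → B) :
    shiftMulAut B G n F y = F ((shiftPerm B ^ n.toAdd) y) := by
  simp only [shiftMulAut, MonoidHom.comp_apply, zpowersHom_apply, mulAutArrow_apply_apply]
  show F (((shiftPerm B)⁻¹ ^ n.toAdd)⁻¹ y) = _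
  rw [inv_zpow, inv_inv]

abbrev ShiftSemidirect := ((ℤ → B) → G) ⋊[shiftMulAut B G] Multiplicative ℤ

end Semidirect

section Realizations

variable (B C G A : Type*) [Group G] [MulAction G A]

def trackCtrlHom : ((ℤ → B) → Perm C) →* Perm (ℤ → B × C) where
  toFun F :=
    { toFun x i := ((x i).1, F ((shiftPerm B ^ i) fun j => (x j).1) (x i).2)
      invFun x i := ((x i).1, (F ((shiftPerm B ^ i) fun j => (x j).1)).symm (x i).2)
      left_inv x := by simp
      right_inv x := by simp }
  map_one' := rfl
  map_mul' _ _ := rfl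

def tapeCtrlHom : ((ℤ → B) → G) →* Perm ((ℤ → B) × A) where
  toFun F := prodCongrRight fun x => MulAction.toPerm (F x)
  map_one' := by ext <;> simp
  map_mul' F F' := by ext <;> simp [mul_smul]

variable {B C G A}

@[simp]
lemma trackCtrlHom_apply (F : (ℤ → B) → Perm C) (x : ℤ → B × C) (i : ℤ) :
    trackCtrlHom B C F x i = ((x i).1, F ((shiftPerm B ^ i) fun j => (x j).1) (x i).2) := rfl

@[simp]
lemma tapeCtrlHom_apply (F : (ℤ → B) → G) (p : (ℤ → B) × A) :
    tapeCtrlHom B G A F p = (p.1, F p.1 • p.2) := rfl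

lemma trackCtrlHom_shiftMulAut (n : Multiplicative ℤ) (F : (ℤ → B) → Perm C) :
    trackCtrlHom B C (shiftMulAut B _ n F) =
      partialShift₂ B C ^ n.toAdd * trackCtrlHom B C F * (partialShift₂ B C ^ n.toAdd)⁻¹ := by
  ext x i : 2
  rw [← zpow_neg, Perm.mul_apply, Perm.mul_apply]
  simp [-zpow_neg, shiftPerm_zpow_zpow, add_comm]

lemma tapeCtrlHom_shiftMulAut (n : Multiplicative ℤ) (F : (ℤ → B) → G) :
    tapeCtrlHom B G A (shiftMulAut B G n F) =
      (shiftFst B A)⁻¹ ^ n.toAdd * tapeCtrlHom B G A F * ((shiftFst B A)⁻¹ ^ n.toAdd)⁻¹ := by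
  ext p : 1
  rw [inv_zpow', ← zpow_neg, neg_neg, Perm.mul_apply, Perm.mul_apply]
  simp [-zpow_neg, shiftPerm_zpow_zpow]

lemma tapeCtrlHom_mulIndicator (S : Set (ℤ → B)) (g : G) :
    tapeCtrlHom B G A (S.mulIndicator fun _ => g) = ctrlFull g S := by
  ext ⟨x, a⟩ : 1
  by_cases hx : x ∈ S <;> simp [ctrlFull, hx]

end Realizations

namespace ShiftSemidirect

variable {B C G : Type*} [Group G] (A : Type*) [MulAction G A]

def toTracks : ShiftSemidirect B (Perm C) →* Perm (ℤ → B × C) :=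
  lift (trackCtrlHom B C) (zpowersHom _ (partialShift₂ B C))
    fun n => MonoidHom.ext (trackCtrlHom_shiftMulAut n)

noncomputable def toTape : ShiftSemidirect B G →* Perm ((ℤ → B) × A) :=
  lift (tapeCtrlHom B G A) (zpowersHom _ (shiftFst B A)⁻¹)
    fun n => MonoidHom.ext (tapeCtrlHom_shiftMulAut n)

variable (B G)

def symbolGens : Set (ShiftSemidirect B G) :=
  insert (inr (.ofAdd 1)) (Set.range fun p : B → G => inl fun y => p (y 0))

-- `inr (ofAdd (-1))` rather than `inr (ofAdd 1)`, so that `toTape` sends it to `ŝ`.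
def cylinderGens : Set (ShiftSemidirect B G) :=
  insert (inr (.ofAdd (-1)))
    {w | ∃ (g : G) (i : ℤ) (s : B), w = inl ({y | y i = s}.mulIndicator fun _ => g)}

variable {B G}

lemma inr_mem_closure_symbolGens (n : Multiplicative ℤ) :
    inr n ∈ Subgroup.closure (symbolGens B G) := by
  have hn : n = .ofAdd 1 ^ n.toAdd := by rw [← ofAdd_zsmul, smul_eq_mul, mul_one, ofAdd_toAdd]
  rw [hn, map_zpow]
  exact Subgroup.zpow_mem _ (Subgroup.subset_closure (Set.mem_insert _ _)) _

lemma inl_mulIndicator_mem_closure_symbolGens (g : G) (i : ℤ) (s : B) :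
    inl ({y : ℤ → B | y i = s}.mulIndicator fun _ => g) ∈ Subgroup.closure (symbolGens B G) := by
  have hconj : {y : ℤ → B | y i = s}.mulIndicator (fun _ => g) =
      shiftMulAut B G (.ofAdd i) fun y => (Pi.mulSingle s g : B → G) (y 0) := by
    ext y : 1
    simp [Set.mulIndicator_apply, Pi.mulSingle_apply]
  rw [hconj, inl_aut]
  refine Subgroup.mul_mem _ (Subgroup.mul_mem _ (inr_mem_closure_symbolGens _) ?_)
    (inr_mem_closure_symbolGens _)
  exact Subgroup.subset_closure (Set.mem_insert_of_mem _ ⟨_, rfl⟩)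

lemma inl_comp_eval_zero_mem_closure_cylinderGens [Finite B] (p : B → G) :
    inl (fun y : ℤ → B => p (y 0)) ∈ Subgroup.closure (cylinderGens B G) := by
  have := Fintype.ofFinite B
  let readZero : (B → G) →* ShiftSemidirect B G :=
    inl.comp (MonoidHom.pi fun y => Pi.evalMonoidHom (fun _ => G) (y 0))
  have hcyl (b : B) (g : G) :
      readZero (Pi.mulSingle b g) = inl ({y : ℤ → B | y 0 = b}.mulIndicator fun _ => g) := by
    simp only [readZero, MonoidHom.comp_apply, inl_inj]
    ext y : 1
    simp [Set.mulIndicator_apply, Pi.mulSingle_apply]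
  have hprod := Finset.univ.map_noncommProd (fun b => Pi.mulSingle b (p b))
    (fun b _ b' _ _ => Pi.mulSingle_apply_commute p b b') readZero
  rw [Finset.noncommProd_mulSingle] at hprod
  change readZero p ∈ _
  rw [hprod]
  refine Subgroup.noncommProd_mem _ _ fun b _ => ?_
  rw [hcyl]
  exact Subgroup.subset_closure (Set.mem_insert_of_mem _ ⟨_, _, _, rfl⟩)

lemma closure_cylinderGens [Finite B] :
    Subgroup.closure (cylinderGens B G) = Subgroup.closure (symbolGens B G) := by
  have hinr : inr (.ofAdd (-1)) = (inr (.ofAdd 1) : ShiftSemidirect B G)⁻¹ := by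
    rw [ofAdd_neg, map_inv]
  apply le_antisymm
  · rw [Subgroup.closure_le]
    rintro w (rfl | ⟨g, i, s, rfl⟩)
    · exact inr_mem_closure_symbolGens _
    · exact inl_mulIndicator_mem_closure_symbolGens g i s
  · rw [Subgroup.closure_le]
    rintro w (rfl | ⟨p, rfl⟩)
    · rw [← inv_inv (inr _), ← hinr]
      exact Subgroup.inv_mem _ (Subgroup.subset_closure (Set.mem_insert _ _))
    · exact inl_comp_eval_zero_mem_closure_cylinderGens p

end ShiftSemidirect

namespace ShiftSemidirect

variable {B C G : Type*} [Group G] (A : Type*) [MulAction G A]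

@[simp] lemma toTracks_inl (F : (ℤ → B) → Perm C) : toTracks (inl F) = trackCtrlHom B C F :=
  lift_inl ..

@[simp] lemma toTracks_inr (n : Multiplicative ℤ) :
    toTracks (inr n : ShiftSemidirect B (Perm C)) = partialShift₂ B C ^ n.toAdd :=
  lift_inr ..

@[simp] lemma toTape_inl (F : (ℤ → B) → G) : toTape A (inl F) = tapeCtrlHom B G A F :=
  lift_inl ..

@[simp] lemma toTape_inr (n : Multiplicative ℤ) :
    toTape A (inr n : ShiftSemidirect B G) = (shiftFst B A)⁻¹ ^ n.toAdd :=
  lift_inr ..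

lemma map_toTracks_closure_symbolGens :
    (Subgroup.closure (symbolGens B (Perm C))).map toTracks = RGrp B C := by
  rw [MonoidHom.map_closure, RGrp, symbolGens, Set.image_insert_eq, ← Set.range_comp,
    Set.singleton_union, toTracks_inr, toAdd_ofAdd, zpow_one]
  congr 2
  ext f
  constructor
  · rintro ⟨p, rfl⟩
    refine ⟨prodCongrRight p, fun _ => rfl, ?_⟩
    ext x i : 2
    simp [symbolPerm, prodCongrRight]
  · rintro ⟨π, hπ, rfl⟩
    obtain ⟨p, rfl⟩ := Perm.exists_prodCongrRight_eq hπ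
    refine ⟨p, ?_⟩
    ext x i : 2
    simp [symbolPerm, prodCongrRight]

lemma map_toTape_closure_cylinderGens :
    (Subgroup.closure (cylinderGens B G)).map (toTape A) = PGroupFull B G A := by
  rw [MonoidHom.map_closure, PGroupFull, cylinderGens, Set.image_insert_eq, Set.singleton_union,
    toTape_inr, toAdd_ofAdd, zpow_neg_one, inv_inv]
  congr 2
  ext f
  simp [tapeCtrlHom_mulIndicator, eq_comm]

lemma map_toTape_closure_symbolGens [Finite B] :
    (Subgroup.closure (symbolGens B G)).map (toTape A) = PGroupFull B G A := by
  rw [← closure_cylinderGens, map_toTape_closure_cylinderGens]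

lemma toTracks_injective [Nonempty B] [Nontrivial C] :
    Function.Injective (toTracks : ShiftSemidirect B (Perm C) →* _) := by
  rw [injective_iff_map_eq_one]
  rintro ⟨F, n⟩ h
  rw [mk_eq_inl_mul_inr, map_mul, toTracks_inl, toTracks_inr] at h
  have key (x : ℤ → B × C) (i : ℤ) :
      F ((shiftPerm B ^ i) fun j => (x j).1) (x (i + n.toAdd)).2 = (x i).2 := by
    have hx : trackCtrlHom B C F ((partialShift₂ B C ^ n.toAdd) x) i = x i := by
      rw [← Perm.mul_apply, h, Perm.one_apply]
    simpa using congrArg Prod.snd hx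
  obtain ⟨b⟩ := ‹Nonempty B›
  have hn : n.toAdd = 0 :=
    eq_zero_of_forall_apply_zero_eq (g := F fun _ => b) fun z => by
      simpa using (key (fun j => (b, z j)) 0).symm
  have hF : F = 1 := by
    ext y c : 2
    simpa [hn] using key (fun j => (y j, c)) 0
  rw [hF, show n = 1 from hn, mk_eq_inl_mul_inr, map_one, map_one, one_mul]

lemma toTape_injective [Nontrivial B] [Nonempty A] [FaithfulSMul G A] :
    Function.Injective (toTape A : ShiftSemidirect B G →* _) := by
  rw [injective_iff_map_eq_one]
  rintro ⟨F, n⟩ h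
  rw [mk_eq_inl_mul_inr, map_mul, toTape_inl, toTape_inr, inv_zpow', ← eq_inv_iff_mul_eq_one,
    ← zpow_neg, neg_neg] at h
  have key (x : ℤ → B) (a : A) : (x, F x • a) = ((shiftPerm B ^ n.toAdd) x, a) := by
    simpa using congrArg (· (x, a)) h
  obtain ⟨a⟩ := ‹Nonempty A›
  have hn : n.toAdd = 0 :=
    eq_zero_of_forall_apply_zero_eq (g := id) fun z => by
      simpa using congrFun (congrArg Prod.fst (key z a)) 0
  have hF : F = 1 := by
    ext y : 1
    refine eq_of_smul_eq_smul (α := A) fun a => ?_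
    simpa [hn] using congrArg Prod.snd (key y a)
  rw [hF, show n = 1 from hn, mk_eq_inl_mul_inr, map_one, map_one, one_mul]

end ShiftSemidirect

/-- `R[B;C] ≅ P((ℤ → B), Perm C)` with the natural action of `Perm C` on `C`. -/
theorem stmt16 (B C : Type) [Fintype B] [Fintype C]
    (hB : 2 ≤ Fintype.card B) (hC : 2 ≤ Fintype.card C) :
    Nonempty (↥(RGrp B C) ≃* ↥(PGroupFull B (Equiv.Perm C) C)) := by
  have : Nontrivial B := Fintype.one_lt_card_iff_nontrivial.mp hB
  have : Nontrivial C := Fintype.one_lt_card_iff_nontrivial.mp hC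
  open ShiftSemidirect in
  exact ⟨(MulEquiv.subgroupCongr map_toTracks_closure_symbolGens).symm.trans <|
    (Subgroup.equivMapOfInjective _ _ toTracks_injective).symm.trans <|
    (Subgroup.equivMapOfInjective _ _ (toTape_injective C)).trans
      (MulEquiv.subgroupCongr (map_toTape_closure_symbolGens C))⟩
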